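/- arXiv:0810.2877 — 6 statements merged into one kernel-verified Lean document; each statement's English description precedes it below -/
import Mathlib

section
/- Suppose (I, ≤) is a preorder, θ is antitone (j ≤ i implies θ(i) ≤ θ(j), so for j ≤ i there is a canonical monoid homomorphism q(i,j) : M/θ(i) → M/θ(j) with q(i,j)(⟦a⟧_i) = ⟦a⟧_j), I carries the Alexandroff lower-set topology, and F carries the topology generated by the sets [a](U) for a ∈ M and U open. Then a section s : I → F of f (with s(i) ∈ {i} × M/θ(i) for all i) is continuous if and only if for all i, j ∈ I with j ≤ i, q(i,j) applied to the second component of s(i) equals the second component of s(j). -/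
open Topology
/-- The Alexandroff lower-set topology on a preorder: open sets are the lower sets. -/
def lowerTop (I : Type*) [Preorder I] : TopologicalSpace I where
  IsOpen U := IsLowerSet U
  isOpen_univ := isLowerSet_univ
  isOpen_inter := fun _ _ h₁ h₂ => h₁.inter h₂
  isOpen_sUnion := fun _ hS => isLowerSet_sUnion hS

/-- The topology on `F = Σ i, M/θ i` generated by the subbasis of sets
`[m](U) = {(i, ⟦m⟧ᵢ) : i ∈ U}` for `m ∈ M` and `U` open in `τ`. -/
def etaleTop {M I : Type*} [Monoid M] (θ : I → Con M) (τ : TopologicalSpace I) :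
    TopologicalSpace ((i : I) × (θ i).Quotient) :=
  TopologicalSpace.generateFrom
    {V | ∃ (m : M) (U : Set I), τ.IsOpen U ∧
      V = (fun i => (⟨i, (↑m : (θ i).Quotient)⟩ : (i : I) × (θ i).Quotient)) '' U}

/-!
A section `s` pulls `[m](U)` back to `U ∩ {i | s i = ⟦m⟧ᵢ}`, so it is continuous exactly when
every agreement set `{i | s i = ⟦m⟧ᵢ}` is open, i.e. a lower set. Since `q i j` sends `⟦m⟧ᵢ` to
`⟦m⟧ⱼ`, these sets are all lower sets exactly when `s` is compatible with the maps `q`.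
-/

theorem preimage_sigmaMk_image_sigmaMk {ι : Type*} {β : ι → Type*} (s t : ∀ i, β i)
    (U : Set ι) :
    (fun i => (⟨i, s i⟩ : Σ i, β i)) ⁻¹' ((fun i => ⟨i, t i⟩) '' U) = U ∩ {i | s i = t i} := by
  ext i
  simp only [Set.mem_preimage, Set.mem_image, Sigma.mk.inj_iff, Set.mem_inter_iff,
    Set.mem_ofPred_eq]
  constructor
  · rintro ⟨j, hj, rfl, hts⟩
    exact ⟨hj, (eq_of_heq hts).symm⟩
  · rintro ⟨hi, hst⟩
    exact ⟨i, hi, rfl, heq_of_eq hst.symm⟩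

theorem continuous_sigmaMk_etaleTop_iff {M I : Type*} [Monoid M] (θ : I → Con M)
    (τ : TopologicalSpace I) (s : ∀ i, (θ i).Quotient) :
    Continuous[τ, etaleTop θ τ] (fun i => (⟨i, s i⟩ : (i : I) × (θ i).Quotient)) ↔
      ∀ m : M, IsOpen[τ] {i | s i = m} := by
  rw [etaleTop, continuous_generateFrom_iff]
  constructor
  · intro hs m
    have h := hs _ ⟨m, Set.univ, τ.isOpen_univ, rfl⟩
    rwa [preimage_sigmaMk_image_sigmaMk, Set.univ_inter] at h
  · rintro hs _ ⟨m, U, hU, rfl⟩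
    rw [preimage_sigmaMk_image_sigmaMk]
    exact τ.isOpen_inter U _ hU (hs m)

theorem forall_isLowerSet_setOf_eq_coe_iff {M I : Type*} [Mul M] [Preorder I]
    (θ : I → Con M) (q : ∀ i j, j ≤ i → (θ i).Quotient → (θ j).Quotient)
    (hq : ∀ i j (h : j ≤ i) (a : M), q i j h a = (a : (θ j).Quotient))
    (s : ∀ i, (θ i).Quotient) :
    (∀ m : M, IsLowerSet {i | s i = m}) ↔ ∀ i j (h : j ≤ i), q i j h (s i) = s j := by
  constructor
  · intro hs i j hji
    obtain ⟨m, hm⟩ := Quotient.exists_rep (s i)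
    have hsi : s i = m := hm.symm
    have hsj : s j = m := hs m hji hsi
    rw [hsi, hq, hsj]
  · intro hs m i j hji (hsi : s i = m)
    show s j = m
    rw [← hs i j hji, hsi, hq]

theorem stmt4_general {M I : Type*} [Monoid M] [Preorder I] (θ : I → Con M)
    (q : ∀ i j, j ≤ i → (θ i).Quotient →* (θ j).Quotient)
    (hq : ∀ i j (h : j ≤ i) (a : M), q i j h (↑a) = (↑a : (θ j).Quotient))
    (s : ∀ i : I, (θ i).Quotient) :
    Continuous[lowerTop I, etaleTop θ (lowerTop I)]
        (fun i => (⟨i, s i⟩ : (i : I) × (θ i).Quotient)) ↔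
      ∀ i j (h : j ≤ i), q i j h (s i) = s j :=
  (continuous_sigmaMk_etaleTop_iff θ (lowerTop I) s).trans
    (forall_isLowerSet_setOf_eq_coe_iff θ (fun i j h => q i j h) hq s)

/-- Let `M` be a monoid, `(I, ≤)` a preorder, `θ` an antitone family of
congruences on `M` with canonical homomorphisms `q i j : M/θ i → M/θ j` for `j ≤ i`
(characterized by `q i j ⟦a⟧ᵢ = ⟦a⟧ⱼ`). With the Alexandroff lower-set topology on `I`
and the generated topology on `F = Σ i, M/θ i`, a section `s` of `Sigma.fst` (encoded
as `s : ∀ i, (θ i).Quotient`, i.e. `i ↦ (i, s i)`) is continuous iff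
`q i j (s i) = s j` for all `j ≤ i`. -/
theorem stmt4 {M I : Type*} [Monoid M] [Preorder I] (θ : I → Con M)
    (hθ : ∀ i j : I, j ≤ i → θ i ≤ θ j)
    (q : ∀ i j, j ≤ i → (θ i).Quotient →* (θ j).Quotient)
    (hq : ∀ i j (h : j ≤ i) (a : M), q i j h (↑a) = (↑a : (θ j).Quotient))
    (s : ∀ i : I, (θ i).Quotient) :
    Continuous[lowerTop I, etaleTop θ (lowerTop I)]
        (fun i => (⟨i, s i⟩ : (i : I) × (θ i).Quotient)) ↔
      ∀ i j (h : j ≤ i), q i j h (s i) = s j :=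
  stmt4_general θ q hq s
end

section
/- Suppose (I, ≤) is a preorder, θ is antitone (j ≤ i implies θ(i) ≤ θ(j), with canonical homomorphisms q(i,j) : M/θ(i) → M/θ(j) for j ≤ i), I carries the Alexandroff lower-set topology, and F carries the topology generated by the sets [a](U) for a ∈ M and U open. Then the set of continuous sections of f : F → I is in bijection with the set of compatible families {(m_i)_{i ∈ I} ∈ ∏_{i∈I} M/θ(i) : q(i,j)(m_i) = m_j for all j ≤ i}, the bijection sending a continuous section s to the family of second components of the s(i). -/
open Topology

/- A section `i ↦ (i, sᵢ)` pulls the basic open `[m](U)` back to `{k ∈ U | sₖ = ⟦m⟧ₖ}`. For the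
lower-set topology these are all lower sets exactly when every value `sᵢ = ⟦m⟧ᵢ` propagates
downwards as `sⱼ = ⟦m⟧ⱼ`, and since every class has a representative and `q i j ⟦m⟧ᵢ = ⟦m⟧ⱼ`,
that is the compatibility condition `q i j sᵢ = sⱼ`. -/

section

variable {M I : Type*} [Monoid M] (θ : I → Con M)

theorem preimage_section_image_const (s : ∀ i, (θ i).Quotient) (m : M) (U : Set I) :
    (fun i => (⟨i, s i⟩ : (i : I) × (θ i).Quotient)) ⁻¹'
        ((fun i => (⟨i, (↑m : (θ i).Quotient)⟩ : (i : I) × (θ i).Quotient)) '' U) =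
      {k | k ∈ U ∧ s k = (↑m : (θ k).Quotient)} := by
  ext k
  simp only [Set.mem_preimage, Set.mem_image, Set.mem_ofPred_eq, Sigma.mk.inj_iff]
  constructor
  · rintro ⟨k, hk, rfl, he⟩
    exact ⟨hk, (eq_of_heq he).symm⟩
  · rintro ⟨hk, he⟩
    exact ⟨k, hk, rfl, heq_of_eq he.symm⟩

theorem continuous_section_lowerTop_iff [Preorder I] (s : ∀ i, (θ i).Quotient) :
    Continuous[lowerTop I, etaleTop θ (lowerTop I)]
        (fun i => (⟨i, s i⟩ : (i : I) × (θ i).Quotient)) ↔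
      ∀ i j, j ≤ i → ∀ m : M, s i = (↑m : (θ i).Quotient) → s j = (↑m : (θ j).Quotient) := by
  rw [etaleTop, continuous_generateFrom_iff]
  constructor
  · intro hc i j hji m hi
    have hlow : IsLowerSet {k | k ∈ Set.univ ∧ s k = (↑m : (θ k).Quotient)} := by
      rw [← preimage_section_image_const]
      exact hc _ ⟨m, Set.univ, isLowerSet_univ, rfl⟩
    exact (hlow hji ⟨trivial, hi⟩).2
  · rintro hprop V ⟨m, U, hU, rfl⟩
    rw [preimage_section_image_const]
    rintro i j hji ⟨hiU, hi⟩
    exact ⟨hU hji hiU, hprop i j hji m hi⟩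

theorem compatible_iff_forall_mk_eq [Preorder I]
    (q : ∀ i j, j ≤ i → (θ i).Quotient →* (θ j).Quotient)
    (hq : ∀ i j (h : j ≤ i) (a : M), q i j h (↑a) = (↑a : (θ j).Quotient))
    (s : ∀ i, (θ i).Quotient) :
    (∀ i j (h : j ≤ i), q i j h (s i) = s j) ↔
      ∀ i j, j ≤ i → ∀ m : M, s i = (↑m : (θ i).Quotient) → s j = (↑m : (θ j).Quotient) := by
  constructor
  · rintro hcomp i j hji m hi
    rw [← hcomp i j hji, hi, hq]
  · intro hprop i j hji
    obtain ⟨m, hm⟩ : ∃ m : M, (↑m : (θ i).Quotient) = s i := Con.mk'_surjective (s i)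
    rw [← hm, hq]
    exact (hprop i j hji m hm.symm).symm

end

theorem stmt5_general {M I : Type*} [Monoid M] [Preorder I] (θ : I → Con M)
    (q : ∀ i j, j ≤ i → (θ i).Quotient →* (θ j).Quotient)
    (hq : ∀ i j (h : j ≤ i) (a : M), q i j h (↑a) = (↑a : (θ j).Quotient)) :
    ∃ e : {s : ∀ i : I, (θ i).Quotient //
            Continuous[lowerTop I, etaleTop θ (lowerTop I)]
              fun i => (⟨i, s i⟩ : (i : I) × (θ i).Quotient)} ≃
          {w : ∀ i : I, (θ i).Quotient // ∀ i j (h : j ≤ i), q i j h (w i) = w j},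
      ∀ s, (e s).1 = s.1 :=
  ⟨Equiv.subtypeEquivRight fun s =>
      (continuous_section_lowerTop_iff θ s).trans (compatible_iff_forall_mk_eq θ q hq s).symm,
    fun _ => rfl⟩

/-- Let `M` be a monoid, `(I, ≤)` a preorder, `θ` an antitone family of
congruences on `M` with canonical homomorphisms `q i j : M/θ i → M/θ j` for `j ≤ i`
(characterized by `q i j ⟦a⟧ᵢ = ⟦a⟧ⱼ`). With the Alexandroff lower-set topology on `I`
and the generated topology on `F = Σ i, M/θ i`, the set of continuous sections of
`Sigma.fst : F → I` (encoded as dependent families `s : ∀ i, (θ i).Quotient` with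
`i ↦ (i, s i)` continuous) is in bijection with the set of compatible families
`{(mᵢ)ᵢ : q i j mᵢ = mⱼ for all j ≤ i}`, the bijection sending a continuous section to
its family of (second) components. -/
theorem stmt5 {M I : Type*} [Monoid M] [Preorder I] (θ : I → Con M)
    (hθ : ∀ i j : I, j ≤ i → θ i ≤ θ j)
    (q : ∀ i j, j ≤ i → (θ i).Quotient →* (θ j).Quotient)
    (hq : ∀ i j (h : j ≤ i) (a : M), q i j h (↑a) = (↑a : (θ j).Quotient)) :
    ∃ e : {s : ∀ i : I, (θ i).Quotient //
            Continuous[lowerTop I, etaleTop θ (lowerTop I)]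
              fun i => (⟨i, s i⟩ : (i : I) × (θ i).Quotient)} ≃
          {w : ∀ i : I, (θ i).Quotient // ∀ i j (h : j ≤ i), q i j h (w i) = w j},
      ∀ s, (e s).1 = s.1 :=
  stmt5_general θ q hq
end

section
/- Let M be a monoid, (I, τ) a topological space, and θ a family of congruences on M indexed by I, with F carrying the topology generated by the sets [a](U) for a ∈ M and U ∈ τ. Then the following are equivalent: (1) τ is an S-topology for θ (whenever (a,b) ∈ θ(i) there is a τ-open U containing i with (a,b) ∈ θ(j) for all j ∈ U); (2) the projection f : F → I is a local homeomorphism (every point of F has an open neighborhood that f maps homeomorphically onto an open subset of I). -/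
/-- `τ` is an S-topology for the family of congruences `θ` if whenever `(a,b) ∈ θ i`
there is a `τ`-open set `U ∋ i` with `(a,b) ∈ θ j` for all `j ∈ U`. -/
def IsSTopology {M I : Type*} [Monoid M] (θ : I → Con M) (τ : TopologicalSpace I) : Prop :=
  ∀ (a b : M) (i : I), θ i a b → ∃ U : Set I, τ.IsOpen U ∧ i ∈ U ∧ ∀ j ∈ U, θ j a b

/-!
The sets `[a](U)` are exactly the images `σₐ '' U` of the sections `σₐ : i ↦ (i, ⟦a⟧ᵢ)` of the
projection, and these images cover `F`. Since `σₘ ⁻¹' [a](U) = U ∩ {j | (a, m) ∈ θ j}`, the S-topology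
condition — openness of every set `{j | (a, b) ∈ θ j}` — says precisely that every `σₘ` is continuous.
Continuous sections with open range exhibit the projection as a local homeomorphism; conversely,
a section with open range of an open map is automatically continuous.
-/

open Set Function Topology

section Sections

variable {X Y : Type*} [TopologicalSpace X] [TopologicalSpace Y]

theorem Function.LeftInverse.continuous_of_isOpenMap {p : X → Y} {s : Y → X}
    (hps : LeftInverse p s) (hp : IsOpenMap p) (hs : IsOpen (range s)) : Continuous s := by
  refine continuous_def.2 fun V hV => ?_
  have hpre : s ⁻¹' V = p '' (V ∩ range s) := by
    ext y
    constructor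
    · exact fun hy => ⟨s y, ⟨hy, mem_range_self y⟩, hps y⟩
    · rintro ⟨_, ⟨hV, z, rfl⟩, rfl⟩
      rwa [mem_preimage, hps z]
  exact hpre ▸ hp _ (hV.inter hs)

theorem isLocalHomeomorph_of_forall_mem_range_section {p : X → Y} (hp : Continuous p)
    (h : ∀ x, ∃ s : Y → X, Continuous s ∧ LeftInverse p s ∧ IsOpen (range s) ∧ x ∈ range s) :
    IsLocalHomeomorph p := by
  intro x
  obtain ⟨s, hs, hps, hrange, hx⟩ := h x
  refine ⟨{ toFun := p
            invFun := s
            source := range s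
            target := univ
            map_source' := fun _ _ => mem_univ _
            map_target' := fun y _ => mem_range_self y
            left_inv' := by rintro _ ⟨y, rfl⟩; rw [hps y]
            right_inv' := fun y _ => hps y
            open_source := hrange
            open_target := isOpen_univ
            continuousOn_toFun := hp.continuousOn
            continuousOn_invFun := hs.continuousOn }, hx, rfl⟩

end Sections

section EtaleSpace

variable {M I : Type*} [Monoid M] (θ : I → Con M)

def sectionOf (m : M) (i : I) : (i : I) × (θ i).Quotient := ⟨i, m⟩

theorem leftInverse_fst_sectionOf (m : M) : LeftInverse Sigma.fst (sectionOf θ m) :=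
  fun _ => rfl

theorem preimage_sectionOf_image_sectionOf (a m : M) (U : Set I) :
    sectionOf θ m ⁻¹' (sectionOf θ a '' U) = U ∩ {j | θ j a m} := by
  ext j
  simp only [sectionOf, mem_preimage, mem_image, Sigma.mk.injEq, mem_inter_iff, mem_ofPred_eq]
  constructor
  · rintro ⟨k, hk, rfl, h⟩
    exact ⟨hk, (θ k).eq.mp (eq_of_heq h)⟩
  · rintro ⟨hj, h⟩
    exact ⟨j, hj, rfl, heq_of_eq ((θ j).eq.mpr h)⟩

variable [τ : TopologicalSpace I]

theorem isOpen_image_sectionOf (m : M) {U : Set I} (hU : IsOpen U) :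
    IsOpen[etaleTop θ τ] (sectionOf θ m '' U) :=
  .basic _ ⟨m, U, hU, rfl⟩

theorem isOpen_range_sectionOf (m : M) : IsOpen[etaleTop θ τ] (range (sectionOf θ m)) :=
  image_univ (f := sectionOf θ m) ▸ isOpen_image_sectionOf θ m isOpen_univ

theorem continuous_fst_etaleTop :
    Continuous[etaleTop θ τ, τ] (Sigma.fst : (i : I) × (θ i).Quotient → I) := by
  refine continuous_def.2 fun U hU => ?_
  have hcover : Sigma.fst ⁻¹' U = ⋃ m, sectionOf θ m '' U := by
    ext ⟨j, x⟩
    induction x using Con.induction_on with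
    | H m => simpa [sectionOf] using fun _ => ⟨m, (θ j).refl m⟩
  exact hcover ▸ @isOpen_iUnion _ _ (etaleTop θ τ) _ fun m => isOpen_image_sectionOf θ m hU

theorem continuous_sectionOf_iff :
    (∀ m, Continuous[τ, etaleTop θ τ] (sectionOf θ m)) ↔ ∀ a b, IsOpen {j | θ j a b} := by
  constructor
  · intro h a b
    have hpre := preimage_sectionOf_image_sectionOf θ a b univ
    rw [univ_inter, image_univ] at hpre
    exact hpre ▸ (continuous_def.1 (h b)) _ (isOpen_range_sectionOf θ a)
  · rintro h m
    refine continuous_generateFrom_iff.2 ?_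
    rintro _ ⟨a, U, hU, rfl⟩
    exact preimage_sectionOf_image_sectionOf θ a m U ▸ (show IsOpen U from hU).inter (h a m)

theorem isLocalHomeomorph_fst_iff_continuous_sectionOf :
    @IsLocalHomeomorph ((i : I) × (θ i).Quotient) I (etaleTop θ τ) τ Sigma.fst ↔
      ∀ m, Continuous[τ, etaleTop θ τ] (sectionOf θ m) := by
  let := etaleTop θ τ
  constructor
  · exact fun h m =>
      (leftInverse_fst_sectionOf θ m).continuous_of_isOpenMap h.isOpenMap
        (isOpen_range_sectionOf θ m)
  · refine fun h => isLocalHomeomorph_of_forall_mem_range_section (continuous_fst_etaleTop θ) ?_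
    rintro ⟨i, x⟩
    induction x using Con.induction_on with
    | H m => exact ⟨sectionOf θ m, h m, leftInverse_fst_sectionOf θ m,
        isOpen_range_sectionOf θ m, i, rfl⟩

theorem isSTopology_iff_isOpen_setOf : IsSTopology θ τ ↔ ∀ a b, IsOpen {j | θ j a b} := by
  unfold IsSTopology
  refine forall₂_congr fun a b => ?_
  rw [isOpen_iff_forall_mem_open]
  exact forall_congr' fun i => imp_congr_right fun _ =>
    ⟨fun ⟨U, hU, hi, hsub⟩ => ⟨U, hsub, hU, hi⟩, fun ⟨U, hsub, hU, hi⟩ => ⟨U, hU, hi, hsub⟩⟩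

end EtaleSpace

/-- Let `M` be a monoid, `(I, τ)` a topological space, `θ` a family
of congruences on `M` indexed by `I`, and let `F = Σ i, M/θ i` carry the topology
generated by the sets `[m](U)`. Then `τ` is an S-topology for `θ` if and only if the
projection `Sigma.fst : F → I` is a local homeomorphism. -/
theorem stmt6 {M I : Type*} [Monoid M] (θ : I → Con M) (τ : TopologicalSpace I) :
    IsSTopology θ τ ↔
      @IsLocalHomeomorph ((i : I) × (θ i).Quotient) I (etaleTop θ τ) τ Sigma.fst :=
  (isSTopology_iff_isOpen_setOf θ).trans <|
    (continuous_sectionOf_iff θ).symm.trans (isLocalHomeomorph_fst_iff_continuous_sectionOf θ).symm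
end

section
/- Let M be a monoid, (I, τ) a topological space, and θ a family of congruences on M indexed by I, with F carrying the topology generated by the sets [a](U) for a ∈ M and U ∈ τ. If τ is an S-topology for θ, then for every a ∈ M the map [a] : I → F defined by [a](i) = (i, ⟦a⟧_i) is a continuous section of f. -/
open Topology

theorem Sigma.mk_preimage_image_mk {I : Type*} {β : I → Type*} (f g : (i : I) → β i)
    (U : Set I) :
    (fun i => (⟨i, f i⟩ : Sigma β)) ⁻¹' ((fun i => ⟨i, g i⟩) '' U) = U ∩ {i | g i = f i} := by
  ext i
  constructor
  · rintro ⟨j, hjU, hj⟩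
    obtain ⟨rfl, hgf⟩ := Sigma.mk.inj hj
    exact ⟨hjU, eq_of_heq hgf⟩
  · rintro ⟨hiU, hgf⟩
    exact ⟨i, hiU, congrArg (Sigma.mk i) hgf⟩

theorem IsSTopology.isOpen_setOf_rel {M I : Type*} [Monoid M] {θ : I → Con M}
    {τ : TopologicalSpace I} (hS : IsSTopology θ τ) (a b : M) : IsOpen[τ] {i | θ i a b} := by
  let _ := τ
  refine isOpen_iff_forall_mem_open.mpr fun i hi => ?_
  obtain ⟨U, hU, hiU, hUab⟩ := hS a b i hi
  exact ⟨U, hUab, hU, hiU⟩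

/-- Let `M` be a monoid, `(I, τ)` a topological space, `θ` a family of
congruences on `M`, with `F = Σ i, M/θ i` carrying the generated topology. If `τ` is an
S-topology for `θ`, then for every `a ∈ M` the map `[a] : i ↦ (i, ⟦a⟧ᵢ)` is a continuous
section of `Sigma.fst : F → I`. -/
theorem stmt7 {M I : Type*} [Monoid M] (θ : I → Con M) (τ : TopologicalSpace I)
    (hS : IsSTopology θ τ) (a : M) :
    Continuous[τ, etaleTop θ τ]
        (fun i => (⟨i, (↑a : (θ i).Quotient)⟩ : (i : I) × (θ i).Quotient)) ∧
      ∀ i : I,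
        Sigma.fst (⟨i, (↑a : (θ i).Quotient)⟩ : (i : I) × (θ i).Quotient) = i := by
  refine ⟨?_, fun _ => rfl⟩
  rw [etaleTop, continuous_generateFrom_iff]
  rintro _ ⟨m, U, hU, rfl⟩
  rw [Sigma.mk_preimage_image_mk]
  simp_rw [Con.eq]
  exact τ.isOpen_inter _ _ hU (hS.isOpen_setOf_rel m a)
end

section
/- Let M be a monoid, I a set, and θ a family of congruences on M indexed by I. Let τ1 ⊆ τ2 be two topologies on I such that every set E(a,b) = {i ∈ I : (a,b) ∈ θ(i)} is τ1-open. Then every section s : I → F of f that is continuous with respect to τ1 on I and the topology on F generated by the sets [a](U) with U ∈ τ1 is also continuous with respect to τ2 on I and the topology on F generated by the sets [a](U) with U ∈ τ2. -/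
open Topology

/-! A section `i ↦ (i, s i)` pulls the subbasic set `[m](U)` back to `{i | s i = ⟦m⟧ᵢ} ∩ U`,
so it is continuous for the topology generated from `τ` exactly when each of the loci
`{i | s i = ⟦m⟧ᵢ}` is `τ`-open. That condition only gets weaker as `τ` grows. -/

theorem preimage_section_image_coe {M I : Type*} [Monoid M] {θ : I → Con M}
    (s : ∀ i, (θ i).Quotient) (m : M) (U : Set I) :
    (fun i => (⟨i, s i⟩ : (i : I) × (θ i).Quotient)) ⁻¹'
        ((fun i => (⟨i, (m : (θ i).Quotient)⟩ : (i : I) × (θ i).Quotient)) '' U) =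
      {i | s i = m} ∩ U := by
  ext i
  simp only [Set.mem_preimage, Set.mem_image, Set.mem_inter_iff, Set.mem_ofPred_eq,
    Sigma.mk.inj_iff]
  constructor
  · rintro ⟨j, hj, rfl, hm⟩
    exact ⟨(eq_of_heq hm).symm, hj⟩
  · rintro ⟨hs, hi⟩
    exact ⟨i, hi, rfl, heq_of_eq hs.symm⟩

theorem continuous_section_etaleTop_iff {M I : Type*} [Monoid M] {θ : I → Con M}
    (τ : TopologicalSpace I) (s : ∀ i, (θ i).Quotient) :
    Continuous[τ, etaleTop θ τ] (fun i => (⟨i, s i⟩ : (i : I) × (θ i).Quotient)) ↔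
      ∀ m : M, IsOpen[τ] {i | s i = m} := by
  constructor
  · intro hs m
    have hbasic : IsOpen[etaleTop θ τ]
        ((fun i => (⟨i, (m : (θ i).Quotient)⟩ : (i : I) × (θ i).Quotient)) '' Set.univ) :=
      TopologicalSpace.isOpen_generateFrom_of_mem ⟨m, Set.univ, τ.isOpen_univ, rfl⟩
    simpa only [preimage_section_image_coe, Set.inter_univ] using
      @Continuous.isOpen_preimage _ _ τ (etaleTop θ τ) _ hs _ hbasic
  · intro hloci
    rw [etaleTop, continuous_generateFrom_iff]
    rintro _ ⟨m, U, hU, rfl⟩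
    rw [preimage_section_image_coe]
    exact τ.isOpen_inter _ _ (hloci m) hU

theorem stmt9_general {M I : Type*} [Monoid M] (θ : I → Con M)
    (τ₁ τ₂ : TopologicalSpace I)
    (h12 : ∀ U : Set I, τ₁.IsOpen U → τ₂.IsOpen U)
    (s : ∀ i : I, (θ i).Quotient)
    (h1 : Continuous[τ₁, etaleTop θ τ₁]
      fun i => (⟨i, s i⟩ : (i : I) × (θ i).Quotient)) :
    Continuous[τ₂, etaleTop θ τ₂]
      fun i => (⟨i, s i⟩ : (i : I) × (θ i).Quotient) :=
  (continuous_section_etaleTop_iff τ₂ s).2 fun m =>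
    h12 _ ((continuous_section_etaleTop_iff τ₁ s).1 h1 m)

/-- Let `M` be a monoid, `I` a set, `θ` a family of congruences on `M`,
and `τ₁ ⊆ τ₂` two topologies on `I` such that every equalizer set
`E(a,b) = {i : (a,b) ∈ θ i}` is `τ₁`-open. Then every section of `Sigma.fst : F → I`
(encoded as `s : ∀ i, (θ i).Quotient`, i.e. `i ↦ (i, s i)`) that is continuous for `τ₁`
and the topology on `F` generated from `τ₁` is also continuous for `τ₂` and the topology
on `F` generated from `τ₂`. -/
theorem stmt9 {M I : Type*} [Monoid M] (θ : I → Con M)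
    (τ₁ τ₂ : TopologicalSpace I)
    (h12 : ∀ U : Set I, τ₁.IsOpen U → τ₂.IsOpen U)
    (hE : ∀ a b : M, τ₁.IsOpen {i : I | θ i a b})
    (s : ∀ i : I, (θ i).Quotient)
    (h1 : Continuous[τ₁, etaleTop θ τ₁]
      fun i => (⟨i, s i⟩ : (i : I) × (θ i).Quotient)) :
    Continuous[τ₂, etaleTop θ τ₂]
      fun i => (⟨i, s i⟩ : (i : I) × (θ i).Quotient) :=
  stmt9_general θ τ₁ τ₂ h12 s h1
end

section
/- Let (A,D) be a dependence graph and let (A_j, D_j), j ∈ J, be a finite family of subgraphs of (A,D). Let π : M(A,D) → ∏_{j∈J} M(A_j,D_j) be the monoid homomorphism whose j-th component is the canonical projection π_{(A_j,D_j)}. Then π is injective if and only if A = ⋃_{j∈J} A_j and D = ⋃_{j∈J} D_j. -/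
/-!
A trace is determined by its projections onto the dependent pairs `{a, b}` (with `D a b`,
including `a = b`): moving the first occurrence of the first letter of `u` to the front of `v`
only crosses letters independent of it, and induction on the length finishes.
Projecting onto `{a, b}` with `D' j a b` factors through `π j`, so if `D = ⋃ D' j` then `π`
determines all these projections and is injective. Conversely, if `π` is injective, a letter
outside every `A' j` would be identified with `1`, and an edge `D a b` with `a ≠ b` lying in no
`D' j` would make `π (a b) = π (b a)` although `a b ≠ b a` in `M(A, D)`.
-/

/-- The pairs generating the trace congruence: `a·b ~ b·a` for independent letters
(`¬ D a b`). -/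
def TraceRel (A : Type*) (D : A → A → Prop) :
    FreeMonoid A → FreeMonoid A → Prop := fun x y =>
  ∃ a b : A, ¬ D a b ∧ x = FreeMonoid.of a * FreeMonoid.of b ∧
    y = FreeMonoid.of b * FreeMonoid.of a

/-- The trace congruence on the free monoid over `A` w.r.t. the dependence relation
`D`. -/
def traceCon (A : Type*) (D : A → A → Prop) : Con (FreeMonoid A) :=
  conGen (TraceRel A D)

/-- The trace monoid `M(A,D)`: the quotient of the free monoid on `A` by the
congruence generated by `a·b = b·a` for all `a, b` with `¬ D a b`. -/
abbrev TraceMonoid (A : Type*) (D : A → A → Prop) := (traceCon A D).Quotient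

namespace FreeMonoid

variable {A : Type*}

def filterHom (p : A → Bool) : FreeMonoid A →* FreeMonoid A where
  toFun w := ofList (w.toList.filter p)
  map_one' := rfl
  map_mul' x y := by rw [toList_mul, List.filter_append, ofList_append]

@[simp]
theorem toList_filterHom (p : A → Bool) (w : FreeMonoid A) :
    (filterHom p w).toList = w.toList.filter p :=
  rfl

theorem filterHom_of (p : A → Bool) (a : A) :
    filterHom p (of a) = if p a then of a else 1 := by
  rw [← toList.injective.eq_iff, toList_filterHom, toList_of]
  by_cases h : p a <;> simp [h]

theorem commute_filterHom_of_of {p : A → Bool} {a b : A}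
    (h : a = b ∨ p a = false ∨ p b = false) :
    Commute (filterHom p (of a)) (filterHom p (of b)) := by
  rcases h with rfl | h | h
  · rfl
  · rw [filterHom_of p a, if_neg (by simp [h])]
    exact Commute.one_left _
  · rw [filterHom_of p b, if_neg (by simp [h])]
    exact Commute.one_right _

end FreeMonoid

open FreeMonoid

section Pair

variable {A : Type*} [DecidableEq A]

def pairPred (a b : A) (x : A) : Bool := decide (x = a ∨ x = b)

@[simp]
theorem pairPred_eq_true {a b x : A} : pairPred a b x = true ↔ x = a ∨ x = b := by
  simp [pairPred]

theorem pairPred_clique {R : A → A → Prop} (hR : ∀ x y, R x y → R y x) {a b : A}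
    (hab : R a b) {x y : A} (hx : pairPred a b x = true) (hy : pairPred a b y = true)
    (hxy : x ≠ y) : R x y := by
  rw [pairPred_eq_true] at hx hy
  rcases hx with rfl | rfl <;> rcases hy with rfl | rfl
  exacts [absurd rfl hxy, hab, hR _ _ hab, absurd rfl hxy]

theorem commute_filterHom_pair_of_of {R : A → A → Prop} (hR : ∀ x y, R x y → R y x)
    {a b : A} (hab : R a b) {x y : A} (hxy : ¬ R x y) :
    Commute (filterHom (pairPred a b) (of x)) (filterHom (pairPred a b) (of y)) := by
  refine commute_filterHom_of_of ?_
  by_contra! h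
  simp only [ne_eq, Bool.not_eq_false] at h
  exact hxy (pairPred_clique hR hab h.2.1 h.2.2 h.1)

end Pair

namespace TraceMonoid

variable {A : Type*} {D : A → A → Prop}

theorem traceCon_le_ker {M : Type*} [Monoid M] (f : FreeMonoid A →* M)
    (hf : ∀ a b, ¬ D a b → Commute (f (of a)) (f (of b))) : traceCon A D ≤ Con.ker f :=
  Con.conGen_le.2 fun _ _ ⟨a, b, hab, hx, hy⟩ => by
    rw [Con.ker_rel, hx, hy, map_mul, map_mul]
    exact hf a b hab

def lift {M : Type*} [Monoid M] (f : FreeMonoid A →* M)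
    (hf : ∀ a b, ¬ D a b → Commute (f (of a)) (f (of b))) : TraceMonoid A D →* M :=
  (traceCon A D).lift f (traceCon_le_ker f hf)

@[simp]
theorem lift_coe {M : Type*} [Monoid M] (f : FreeMonoid A →* M)
    (hf : ∀ a b, ¬ D a b → Commute (f (of a)) (f (of b))) (w : FreeMonoid A) :
    lift f hf (w : TraceMonoid A D) = f w :=
  rfl

theorem commute_of_of {a b : A} (h : ¬ D a b) :
    Commute ((of a : FreeMonoid A) : TraceMonoid A D) (of b : FreeMonoid A) := by
  rw [Commute, SemiconjBy, ← Con.coe_mul, ← Con.coe_mul, Con.eq]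
  exact ConGen.Rel.of _ _ ⟨a, b, h, rfl, rfl⟩

theorem of_ne_one (a : A) : ((of a : FreeMonoid A) : TraceMonoid A D) ≠ 1 := by
  intro h
  have := congrArg (lift (FreeMonoid.lift fun _ => Multiplicative.ofAdd (1 : ℕ))
    fun _ _ _ => Commute.all _ _) h
  simp at this

theorem commute_of_ofList {c : A} {l : List A} (h : ∀ d ∈ l, ¬ D d c) :
    Commute ((ofList l : FreeMonoid A) : TraceMonoid A D) (of c : FreeMonoid A) := by
  induction l with
  | nil => exact Commute.one_left _
  | cons d l ih =>
    rw [ofList_cons, Con.coe_mul]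
    exact (commute_of_of (h d List.mem_cons_self)).mul_left
      (ih fun e he => h e (List.mem_cons_of_mem d he))

theorem filterHom_pair_eq_of_coe_eq [DecidableEq A] (hsymm : ∀ a b, D a b → D b a)
    {a b : A} (hab : D a b) {u v : FreeMonoid A} (h : (u : TraceMonoid A D) = v) :
    filterHom (pairPred a b) u = filterHom (pairPred a b) v := by
  simpa using congrArg (lift (D := D) _ fun _ _ => commute_filterHom_pair_of_of hsymm hab) h

theorem commute_of_of_iff (hsymm : ∀ a b, D a b → D b a) {a b : A} :
    Commute ((of a : FreeMonoid A) : TraceMonoid A D) (of b : FreeMonoid A) ↔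
      a = b ∨ ¬ D a b := by
  classical
  refine ⟨fun h => or_iff_not_imp_right.2 fun hab => ?_, ?_⟩
  · have hab' : a = b ∧ b = a := by
      simpa [filterHom_of] using
        congrArg toList (filterHom_pair_eq_of_coe_eq hsymm (not_not.1 hab) h)
    exact hab'.1
  · rintro (rfl | h)
    exacts [Commute.refl _, commute_of_of h]

theorem coe_ofList_eq_of_filter_pair_eq [DecidableEq A] (hrefl : ∀ a, D a a)
    (hsymm : ∀ a b, D a b → D b a) :
    ∀ u v : List A, (∀ a b, D a b → u.filter (pairPred a b) = v.filter (pairPred a b)) →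
      ((ofList u : FreeMonoid A) : TraceMonoid A D) = ofList v
  | [], v, h => by
    obtain rfl : v = [] := List.eq_nil_iff_forall_not_mem.2 fun e he =>
      (by simpa using (h e e (hrefl e)).symm : ∀ x ∈ v, x ≠ e) e he rfl
    rfl
  | c :: u, v, h => by
    have hcv : c ∈ v := by
      simpa using List.mem_of_mem_filter
        (h c c (hrefl c) ▸ List.mem_filter.2 ⟨List.mem_cons_self, by simp⟩)
    obtain ⟨v₁, v₂, hc, rfl, -⟩ := List.exists_erase_eq hcv
    -- a letter `d` of `v₁` dependent on `c` would precede `c` in the `{c, d}`-projection of `v`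
    have hind : ∀ d ∈ v₁, ¬ D d c := by
      intro d hd hdc
      have hcd := h c d (hsymm _ _ hdc)
      rw [List.filter_cons_of_pos (by simp), List.filter_append,
        List.filter_cons_of_pos (by simp)] at hcd
      rcases List.cons_eq_append_iff.1 hcd with ⟨hnil, -⟩ | ⟨l, hcons, -⟩
      · exact List.not_mem_nil (hnil ▸ List.mem_filter.2 ⟨hd, by simp⟩)
      · exact hc (List.mem_of_mem_filter (hcons ▸ List.mem_cons_self))
    have hmove : ((ofList (v₁ ++ c :: v₂) : FreeMonoid A) : TraceMonoid A D) =
        ofList (c :: (v₁ ++ v₂)) := by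
      simp only [ofList_append, ofList_cons, Con.coe_mul]
      rw [← mul_assoc, (commute_of_ofList hind).eq, mul_assoc]
    have htail : ∀ a b, D a b →
        u.filter (pairPred a b) = (v₁ ++ v₂).filter (pairPred a b) := by
      intro a b hab
      have hcons := (h a b hab).trans
        (congrArg toList (filterHom_pair_eq_of_coe_eq hsymm hab hmove))
      simp only [toList_filterHom, toList_ofList, List.filter_cons] at hcons
      split_ifs at hcons
      exacts [List.cons_injective hcons, hcons]
    rw [hmove, ofList_cons, ofList_cons, Con.coe_mul, Con.coe_mul,
      coe_ofList_eq_of_filter_pair_eq hrefl hsymm u (v₁ ++ v₂) htail]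

theorem coe_eq_iff_filterHom_pair_eq [DecidableEq A] (hrefl : ∀ a, D a a)
    (hsymm : ∀ a b, D a b → D b a) {u v : FreeMonoid A} :
    (u : TraceMonoid A D) = v ↔
      ∀ a b, D a b → filterHom (pairPred a b) u = filterHom (pairPred a b) v :=
  ⟨fun h _ _ hab => filterHom_pair_eq_of_coe_eq hsymm hab h, fun h =>
    coe_ofList_eq_of_filter_pair_eq hrefl hsymm u.toList v.toList fun a b hab =>
      congrArg toList (h a b hab)⟩

end TraceMonoid

def IsCanonicalProjection {A : Type*} {D : A → A → Prop}
    (A₀ : Set A) (D₀ : A → A → Prop)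
    (p : TraceMonoid A D →* TraceMonoid A₀ (fun x y => D₀ x y)) : Prop :=
  (∀ a (h : a ∈ A₀),
      p (of a : FreeMonoid A) = ((of ⟨a, h⟩ : FreeMonoid A₀) : TraceMonoid A₀ _)) ∧
    ∀ a ∉ A₀, p (of a : FreeMonoid A) = 1

namespace IsCanonicalProjection

open TraceMonoid

variable {A : Type*} {D : A → A → Prop} {A₀ : Set A} {D₀ : A → A → Prop}
  {p : TraceMonoid A D →* TraceMonoid A₀ (fun x y => D₀ x y)}

theorem commute_of_of (hp : IsCanonicalProjection A₀ D₀ p) {a b : A} (h : ¬ D₀ a b) :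
    Commute (p (of a : FreeMonoid A)) (p (of b : FreeMonoid A)) := by
  by_cases ha : a ∈ A₀
  · by_cases hb : b ∈ A₀
    · rw [hp.1 a ha, hp.1 b hb]
      exact TraceMonoid.commute_of_of h
    · rw [hp.2 b hb]
      exact Commute.one_right _
  · rw [hp.2 a ha]
    exact Commute.one_left _

theorem filterHom_pair_eq_of_eq [DecidableEq A] (hp : IsCanonicalProjection A₀ D₀ p)
    (hsymm₀ : ∀ a b, D₀ a b → D₀ b a) {a b : A} (hab : D₀ a b)
    (ha : a ∈ A₀) (hb : b ∈ A₀)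
    {u v : FreeMonoid A} (h : p u = p v) :
    filterHom (pairPred a b) u = filterHom (pairPred a b) v := by
  let ψ : TraceMonoid A₀ (fun x y => D₀ x y) →* FreeMonoid A :=
    lift ((filterHom (pairPred a b)).comp (map Subtype.val)) fun _ _ hxy =>
      commute_filterHom_pair_of_of hsymm₀ hab hxy
  have hψ : (ψ.comp p).comp (traceCon A D).mk' = filterHom (pairPred a b) := by
    refine FreeMonoid.hom_eq fun e => ?_
    by_cases he : e ∈ A₀
    · show ψ (p (of e : FreeMonoid A)) = _
      rw [hp.1 e he]
      rfl
    · have he' : pairPred a b e = false := by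
        rw [Bool.eq_false_iff, ne_eq, pairPred_eq_true]
        rintro (rfl | rfl) <;> contradiction
      simp [hp.2 e he, filterHom_of, he']
  rw [← hψ]
  simp [h]

end IsCanonicalProjection

section Family

open TraceMonoid

variable {A : Type*} {D : A → A → Prop} {J : Type*} {A' : J → Set A}
  {D' : J → A → A → Prop}
  {π : ∀ j, TraceMonoid A D →* TraceMonoid (A' j) (fun x y => D' j x y)}

theorem exists_mem_of_injective_proj (hπ : ∀ j, IsCanonicalProjection (A' j) (D' j) (π j))
    (hinj : Function.Injective fun t j => π j t) (a : A) : ∃ j, a ∈ A' j := by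
  by_contra! h
  exact of_ne_one a (hinj (funext fun j => ((hπ j).2 a (h j)).trans (map_one _).symm))

theorem exists_dep_of_injective_proj (hsymm : ∀ a b, D a b → D b a)
    (hrefl' : ∀ j, ∀ a ∈ A' j, D' j a a)
    (hπ : ∀ j, IsCanonicalProjection (A' j) (D' j) (π j))
    (hinj : Function.Injective fun t j => π j t) {a b : A} (hab : D a b) : ∃ j, D' j a b := by
  by_contra! h
  have hcomm : Commute ((of a : FreeMonoid A) : TraceMonoid A D) (of b : FreeMonoid A) :=
    hinj <| funext fun j => by
      simp only [map_mul]
      exact ((hπ j).commute_of_of (h j)).eq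
  obtain rfl := ((commute_of_of_iff hsymm).1 hcomm).resolve_right (not_not.2 hab)
  obtain ⟨j, hj⟩ := exists_mem_of_injective_proj hπ hinj a
  exact h j (hrefl' j a hj)

theorem injective_proj_of_forall_dep (hrefl : ∀ a, D a a) (hsymm : ∀ a b, D a b → D b a)
    (hsupp : ∀ j a b, D' j a b → a ∈ A' j ∧ b ∈ A' j)
    (hsymm' : ∀ j a b, D' j a b → D' j b a)
    (hπ : ∀ j, IsCanonicalProjection (A' j) (D' j) (π j))
    (hD : ∀ a b, D a b → ∃ j, D' j a b) :
    Function.Injective fun t j => π j t := by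
  classical
  intro x y
  refine Con.induction_on₂ x y fun u v huv =>
    (coe_eq_iff_filterHom_pair_eq hrefl hsymm).2 fun a b hab => ?_
  obtain ⟨j, hj⟩ := hD a b hab
  obtain ⟨ha, hb⟩ := hsupp j a b hj
  exact (hπ j).filterHom_pair_eq_of_eq (hsymm' j) hj ha hb (congrFun huv j)

end Family

theorem stmt11_general {A : Type*} (D : A → A → Prop)
    (hD_refl : ∀ a, D a a) (hD_symm : ∀ a b, D a b → D b a)
    {J : Type*}
    (A' : J → Set A) (D' : J → A → A → Prop)
    (hsub : ∀ j a b, D' j a b → D a b)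
    (hsupp : ∀ j a b, D' j a b → a ∈ A' j ∧ b ∈ A' j)
    (hrefl' : ∀ j, ∀ a ∈ A' j, D' j a a)
    (hsymm' : ∀ j a b, D' j a b → D' j b a)
    (π : ∀ j, TraceMonoid A D →* TraceMonoid (A' j) (fun x y => D' j x y))
    (hπ_mem : ∀ j (a : A) (h : a ∈ A' j),
      π j ((FreeMonoid.of a : FreeMonoid A) : TraceMonoid A D) =
        ((FreeMonoid.of (⟨a, h⟩ : A' j) : FreeMonoid (A' j)) :
          TraceMonoid (A' j) (fun x y => D' j x y)))
    (hπ_not : ∀ j (a : A), a ∉ A' j →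
      π j ((FreeMonoid.of a : FreeMonoid A) : TraceMonoid A D) = 1) :
    Function.Injective (fun (t : TraceMonoid A D) (j : J) => π j t) ↔
      ((∀ a : A, ∃ j, a ∈ A' j) ∧ ∀ a b : A, D a b ↔ ∃ j, D' j a b) := by
  have hπ : ∀ j, IsCanonicalProjection (A' j) (D' j) (π j) := fun j =>
    ⟨hπ_mem j, hπ_not j⟩
  constructor
  · intro hinj
    refine ⟨exists_mem_of_injective_proj hπ hinj, fun a b => ⟨fun hab => ?_, ?_⟩⟩
    · exact exists_dep_of_injective_proj hD_symm hrefl' hπ hinj hab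
    · exact fun ⟨j, h⟩ => hsub j a b h
  · rintro ⟨-, hD⟩
    exact injective_proj_of_forall_dep hD_refl hD_symm hsupp hsymm' hπ fun a b => (hD a b).1

/-- Let `(A,D)` be a dependence graph (reflexive symmetric `D`) and
`(A' j, D' j)`, `j ∈ J`, a finite family of subgraphs. Let `π j : M(A,D) → M(A' j, D' j)`
be the canonical projections (sending a letter of `A' j` to its trace and all other
letters to `1`). Then the induced homomorphism `π` into the direct product is injective
iff `A = ⋃ⱼ A' j` and `D = ⋃ⱼ D' j`. -/
theorem stmt11 {A : Type*} (D : A → A → Prop)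
    (hD_refl : ∀ a, D a a) (hD_symm : ∀ a b, D a b → D b a)
    {J : Type*} [Finite J]
    (A' : J → Set A) (D' : J → A → A → Prop)
    (hsub : ∀ j a b, D' j a b → D a b)
    (hsupp : ∀ j a b, D' j a b → a ∈ A' j ∧ b ∈ A' j)
    (hrefl' : ∀ j, ∀ a ∈ A' j, D' j a a)
    (hsymm' : ∀ j a b, D' j a b → D' j b a)
    (π : ∀ j, TraceMonoid A D →* TraceMonoid (A' j) (fun x y => D' j x y))
    (hπ_mem : ∀ j (a : A) (h : a ∈ A' j),
      π j ((FreeMonoid.of a : FreeMonoid A) : TraceMonoid A D) =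
        ((FreeMonoid.of (⟨a, h⟩ : A' j) : FreeMonoid (A' j)) :
          TraceMonoid (A' j) (fun x y => D' j x y)))
    (hπ_not : ∀ j (a : A), a ∉ A' j →
      π j ((FreeMonoid.of a : FreeMonoid A) : TraceMonoid A D) = 1) :
    Function.Injective (fun (t : TraceMonoid A D) (j : J) => π j t) ↔
      ((∀ a : A, ∃ j, a ∈ A' j) ∧ ∀ a b : A, D a b ↔ ∃ j, D' j a b) :=
  stmt11_general D hD_refl hD_symm A' D' hsub hsupp hrefl' hsymm' π hπ_mem hπ_not
end
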